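/- arXiv:1109.3367 — 4 statements merged into one kernel-verified Lean document; each statement's English description precedes it below -/
import Mathlib

section
/- For every integer n ≥ 1, R_n is a Golomb ruler: for every nonzero integer t, the intersection of R_n with its translate R_n + t has cardinality at most 1. -/
/-- `Rset n = {(i-1)·n² + i² : 1 ≤ i ≤ n}` as a finite set of integers. -/
def Rset (n : ℕ) : Finset ℤ :=
  (Finset.Icc 1 n).image fun i : ℕ => ((i : ℤ) - 1) * (n : ℤ) ^ 2 + (i : ℤ) ^ 2

/-- The translate `S + t = {s + t : s ∈ S}`. -/
def shift (S : Finset ℤ) (t : ℤ) : Finset ℤ := S.image (· + t)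

lemma key (n a b c d : ℤ)
    (ha1 : 1 ≤ a) (ha2 : a ≤ n) (hb1 : 1 ≤ b) (hb2 : b ≤ n)
    (hc1 : 1 ≤ c) (hc2 : c ≤ n) (hd1 : 1 ≤ d) (hd2 : d ≤ n)
    (hab : a ≠ b)
    (h : (a - b) * n ^ 2 + (a ^ 2 - b ^ 2) = (c - d) * n ^ 2 + (c ^ 2 - d ^ 2)) :
    a = c ∧ b = d := by
  have hN : (0:ℤ) < n ^ 2 := by nlinarith
  -- first show c ≠ d
  have hcd : c ≠ d := by
    intro hcd
    subst hcd
    rcases lt_or_gt_of_ne hab with h1 | h1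
    · nlinarith
    · nlinarith
  have huv : a - b = c - d := by
    rcases lt_or_gt_of_ne hab with h1 | h1 <;> rcases lt_or_gt_of_ne hcd with h2 | h2
    · -- a < b, c < d
      rcases lt_trichotomy (a - b) (c - d) with h3 | h3 | h3
      · exfalso; nlinarith
      · exact h3
      · exfalso; nlinarith
    · exfalso; nlinarith
    · exfalso; nlinarith
    · rcases lt_trichotomy (a - b) (c - d) with h3 | h3 | h3
      · exfalso; nlinarith
      · exact h3
      · exfalso; nlinarith
  have hsum : a + b = c + d := by
    have h' : (a - b) * (n ^ 2 + (a + b)) = (a - b) * (n ^ 2 + (c + d)) := by ring_nf; nlinarith [huv, h]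
    have := mul_left_cancel₀ (sub_ne_zero.mpr hab) h'
    linarith
  constructor <;> linarith [huv, hsum]

theorem stmt_4 (n : ℕ) (hn : 1 ≤ n) :
    ∀ t : ℤ, t ≠ 0 → (Rset n ∩ shift (Rset n) t).card ≤ 1 := by
  intro t ht
  rw [Finset.card_le_one]
  intro x hx y hy
  simp only [Rset, shift, Finset.mem_inter, Finset.mem_image, Finset.mem_Icc] at hx hy
  obtain ⟨⟨i, ⟨hi1, hi2⟩, hix⟩, ⟨z, ⟨j, ⟨hj1, hj2⟩, hjz⟩, hzx⟩⟩ := hx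
  obtain ⟨⟨k, ⟨hk1, hk2⟩, hky⟩, ⟨w, ⟨l, ⟨hl1, hl2⟩, hlw⟩, hwy⟩⟩ := hy
  have hi1' : (1:ℤ) ≤ i := by exact_mod_cast hi1
  have hi2' : (i:ℤ) ≤ n := by exact_mod_cast hi2
  have hj1' : (1:ℤ) ≤ j := by exact_mod_cast hj1
  have hj2' : (j:ℤ) ≤ n := by exact_mod_cast hj2
  have hk1' : (1:ℤ) ≤ k := by exact_mod_cast hk1
  have hk2' : (k:ℤ) ≤ n := by exact_mod_cast hk2
  have hl1' : (1:ℤ) ≤ l := by exact_mod_cast hl1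
  have hl2' : (l:ℤ) ≤ n := by exact_mod_cast hl2
  -- t = f i - f j = f k - f l
  have ht1 : ((i:ℤ) - j) * (n:ℤ) ^ 2 + ((i:ℤ) ^ 2 - (j:ℤ) ^ 2) = t := by
    have := hzx; rw [← hjz] at this; linarith [hix, this]
  have ht2 : ((k:ℤ) - l) * (n:ℤ) ^ 2 + ((k:ℤ) ^ 2 - (l:ℤ) ^ 2) = t := by
    have := hwy; rw [← hlw] at this; linarith [hky, this]
  have hij : (i:ℤ) ≠ (j:ℤ) := by
    intro hij
    apply ht
    rw [← ht1, hij]; ring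
  have := key (n:ℤ) i j k l hi1' hi2' hj1' hj2' hk1' hk2' hl1' hl2' hij (by rw [ht1, ht2])
  have hik : (i:ℤ) = k := this.1
  rw [← hix, ← hky, hik]
end

section
/- Let (Y_a)_{a∈A} be a family of nonempty finite sets of integers indexed by a finite set A. If there is a partition of A into nonempty sets B and C such that Y_b ∩ Y_c = ∅ for all b ∈ B and c ∈ C (i.e., the intersection graph of the family is disconnected via (B,C)), then there exists a family of integers (u_a)_{a∈A} such that |⋃_{a∈A} (Y_a + u_a)| < |⋃_{a∈A} Y_a|. -/
lemma shift_zero (S : Finset ℤ) : shift S 0 = S := by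
  simp [shift]

lemma card_shift (S : Finset ℤ) (t : ℤ) : (shift S t).card = S.card := by
  unfold shift
  exact Finset.card_image_of_injective _ (add_left_injective t)

lemma biUnion_union' {α β : Type*} [DecidableEq α] [DecidableEq β]
    (s t : Finset α) (f : α → Finset β) :
    (s ∪ t).biUnion f = s.biUnion f ∪ t.biUnion f := by
  ext x
  simp [Finset.mem_biUnion, Finset.mem_union, or_and_right, exists_or]

theorem stmt_6 {α : Type*} [Fintype α] [DecidableEq α] [Nonempty α]
    (Y : α → Finset ℤ) (hY : ∀ a, (Y a).Nonempty)
    (B C : Finset α) (hB : B.Nonempty) (hC : C.Nonempty)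
    (hdisj : Disjoint B C) (hcov : B ∪ C = Finset.univ)
    (hsep : ∀ b ∈ B, ∀ c ∈ C, Y b ∩ Y c = ∅) :
    ∃ u : α → ℤ,
      (Finset.univ.biUnion fun a => shift (Y a) (u a)).card
        < (Finset.univ.biUnion fun a => Y a).card := by
  obtain ⟨b, hb⟩ := hB
  obtain ⟨c, hc⟩ := hC
  obtain ⟨y, hy⟩ := hY b
  obtain ⟨z, hz⟩ := hY c
  set t : ℤ := y - z with ht
  refine ⟨fun a => if a ∈ B then 0 else t, ?_⟩
  have hUB : ∀ a ∈ C, a ∉ B := fun a ha hab => (Finset.disjoint_left.1 hdisj) hab ha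
  -- rewrite unions over B ∪ C
  have hnew : (Finset.univ.biUnion fun a => shift (Y a) (if a ∈ B then 0 else t))
      = (B.biUnion Y) ∪ shift (C.biUnion Y) t := by
    rw [← hcov, biUnion_union']
    congr 1
    · apply Finset.biUnion_congr rfl
      intro a ha
      simp [ha, shift_zero]
    · unfold shift
      symm
      rw [Finset.biUnion_image]
      apply Finset.biUnion_congr rfl
      intro a ha
      simp [hUB a ha]
  have hold : (Finset.univ.biUnion fun a => Y a)
      = (B.biUnion Y) ∪ (C.biUnion Y) := by
    rw [← hcov, biUnion_union']
  rw [hnew, hold]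
  have hdisjU : Disjoint (B.biUnion Y) (C.biUnion Y) := by
    rw [Finset.disjoint_biUnion_left]
    intro i hi
    rw [Finset.disjoint_biUnion_right]
    intro j hj
    rw [Finset.disjoint_iff_inter_eq_empty]
    exact hsep i hi j hj
  rw [Finset.card_union_of_disjoint hdisjU]
  have hyB : y ∈ B.biUnion Y := Finset.mem_biUnion.2 ⟨b, hb, hy⟩
  have hyC : y ∈ shift (C.biUnion Y) t := by
    refine Finset.mem_image.2 ⟨z, Finset.mem_biUnion.2 ⟨c, hc, hz⟩, ?_⟩
    simp [ht]
  have hne : ((B.biUnion Y) ∩ shift (C.biUnion Y) t).Nonempty :=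
    ⟨y, Finset.mem_inter.2 ⟨hyB, hyC⟩⟩
  calc ((B.biUnion Y) ∪ shift (C.biUnion Y) t).card
      < ((B.biUnion Y) ∪ shift (C.biUnion Y) t).card
        + ((B.biUnion Y) ∩ shift (C.biUnion Y) t).card := by
        exact Nat.lt_add_of_pos_right (Finset.card_pos.2 hne)
    _ = (B.biUnion Y).card + (shift (C.biUnion Y) t).card :=
        Finset.card_union_add_card_inter _ _
    _ = (B.biUnion Y).card + (C.biUnion Y).card := by rw [card_shift]
end

section
/- Let (X_a)_{a∈A} be a family of nonempty finite sets of integers indexed by a finite set A, and let (t_a)_{a∈A} be a family of integers minimizing |⋃_{a∈A} (X_a + t_a)| over all integer families. Then the intersection graph of the shifted family (X_a + t_a)_{a∈A} is connected. -/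
/-!
If the shifted sets split into two groups with disjoint unions `U` and `V`, translating the
second group so that a point of `V` lands on a point of `U` makes the whole union strictly
smaller, contradicting minimality.
-/

open Finset

lemma shift_add (S : Finset ℤ) (u s : ℤ) : shift S (u + s) = (shift S u).image (· + s) := by
  simp only [shift, image_image, Function.comp_def, add_assoc]

lemma exists_card_union_image_add_lt {G : Type*} [AddGroup G] [DecidableEq G]
    {U V : Finset G} (hU : U.Nonempty) (hV : V.Nonempty) :
    ∃ s, (U ∪ V.image (· + s)).card < U.card + V.card := by
  obtain ⟨x, hx⟩ := hU
  obtain ⟨y, hy⟩ := hV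
  refine ⟨-y + x, ?_⟩
  have hmeet : x ∈ U ∩ V.image (· + (-y + x)) :=
    mem_inter.2 ⟨hx, mem_image.2 ⟨y, hy, by simp⟩⟩
  have hunion := card_union_add_card_inter U (V.image (· + (-y + x)))
  rw [card_image_of_injective V (add_left_injective _)] at hunion
  have hinter := card_pos.2 ⟨x, hmeet⟩
  omega

lemma biUnion_shift_piecewise {α : Type*} [DecidableEq α] (X : α → Finset ℤ) (t : α → ℤ)
    {B C : Finset α} (hBC : Disjoint B C) (s : ℤ) :
    (B ∪ C).biUnion (fun a => shift (X a) (B.piecewise t (t · + s) a)) =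
      B.biUnion (fun a => shift (X a) (t a)) ∪
        (C.biUnion fun a => shift (X a) (t a)).image (· + s) := by
  rw [union_biUnion, biUnion_image]
  congr 1
  · exact biUnion_congr rfl fun a ha => by rw [piecewise_eq_of_mem _ _ _ ha]
  · refine biUnion_congr rfl fun a ha => ?_
    rw [piecewise_eq_of_notMem _ _ _ (disjoint_right.1 hBC ha), shift_add]

theorem stmt_7_general {α : Type*} [Fintype α] [DecidableEq α]
    (X : α → Finset ℤ) (hX : ∀ a, (X a).Nonempty) (t : α → ℤ)
    (hmin : ∀ t' : α → ℤ,
      (Finset.univ.biUnion fun a => shift (X a) (t a)).card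
        ≤ (Finset.univ.biUnion fun a => shift (X a) (t' a)).card) :
    ∀ B C : Finset α, B.Nonempty → C.Nonempty → Disjoint B C → B ∪ C = Finset.univ →
      ∃ b ∈ B, ∃ c ∈ C, (shift (X b) (t b) ∩ shift (X c) (t c)).Nonempty := by
  intro B C hB hC hBC hcover
  by_contra! hsep
  set U := fun D : Finset α => D.biUnion fun a => shift (X a) (t a)
  have hU_ne {D : Finset α} (hD : D.Nonempty) : (U D).Nonempty :=
    biUnion_nonempty.2 <| hD.exists_mem.imp fun a ha => ⟨ha, (hX a).image _⟩
  have hU_disj : Disjoint (U B) (U C) :=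
    (disjoint_biUnion_left _ _ _).2 fun b hb => (disjoint_biUnion_right _ _ _).2 fun c hc =>
      disjoint_iff_inter_eq_empty.2 (hsep b hb c hc)
  obtain ⟨s, hs⟩ := exists_card_union_image_add_lt (hU_ne hB) (hU_ne hC)
  have hle := hmin (B.piecewise t (t · + s))
  rw [← hcover, biUnion_shift_piecewise X t hBC, union_biUnion,
    card_union_of_disjoint hU_disj] at hle
  exact hs.not_ge hle

theorem stmt_7 {α : Type*} [Fintype α] [DecidableEq α] [Nonempty α]
    (X : α → Finset ℤ) (hX : ∀ a, (X a).Nonempty) (t : α → ℤ)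
    (hmin : ∀ t' : α → ℤ,
      (Finset.univ.biUnion fun a => shift (X a) (t a)).card
        ≤ (Finset.univ.biUnion fun a => shift (X a) (t' a)).card) :
    ∀ B C : Finset α, B.Nonempty → C.Nonempty → Disjoint B C → B ∪ C = Finset.univ →
      ∃ b ∈ B, ∃ c ∈ C, (shift (X b) (t b) ∩ shift (X c) (t c)).Nonempty :=
  stmt_7_general X hX t hmin
end

section
/- Let (X_a)_{a∈A} be a family of nonempty finite integer sets indexed by a nonempty finite set A. The minimum of |⋃_{a∈A} (X_a + t_a)| over all (t_a) ∈ ℤ^A is attained, and it is attained at some family (t_a) with t_b − t_c ∈ (⋃_a X_a) − (⋃_a X_a) for all b, c connected by an edge of some spanning tree of the intersection graph of the shifted family. -/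
/-!
Take `t` minimising `|⋃ (X a + t a)|`. If the intersection graph of the shifted family were
disconnected, the sets indexed by one connected component `C` would be disjoint from the
others, and translating all of them by a common amount that makes one point of the `C`-part
land on a point of the rest would shrink the union. So the intersection graph is connected
and has a spanning tree; along each of its edges `x + t b = y + t c` with `x ∈ X b`,
`y ∈ X c`, whence `t b - t c = y - x`.
-/

open Finset SimpleGraph

def intersectionGraph {α β : Type*} (S : α → Finset β) : SimpleGraph α :=
  SimpleGraph.fromRel fun b c => ¬Disjoint (S b) (S c)

@[simp]
theorem intersectionGraph_adj {α β : Type*} (S : α → Finset β) (b c : α) :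
    (intersectionGraph S).Adj b c ↔ b ≠ c ∧ ¬Disjoint (S b) (S c) := by
  simp [intersectionGraph, disjoint_comm]

theorem Finset.exists_card_image_add_union_lt {G : Type*} [AddGroup G] [DecidableEq G]
    {A B : Finset G} (hA : A.Nonempty) (hB : B.Nonempty) (hAB : Disjoint A B) :
    ∃ s : G, (A.image (· + s) ∪ B).card < (A ∪ B).card := by
  obtain ⟨p, hp⟩ := hA
  obtain ⟨q, hq⟩ := hB
  refine ⟨-p + q, ?_⟩
  have hoverlap : 0 < (A.image (· + (-p + q)) ∩ B).card :=
    card_pos.mpr ⟨q, mem_inter.mpr ⟨mem_image.mpr ⟨p, hp, add_neg_cancel_left p q⟩, hq⟩⟩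
  have hcard := card_union_add_card_inter (A.image (· + (-p + q))) B
  rw [card_image_of_injective _ (add_left_injective _)] at hcard
  rw [card_union_of_disjoint hAB]
  omega

theorem exists_card_biUnion_image_add_lt {α G : Type*} [Fintype α] [Nonempty α] [AddGroup G]
    [DecidableEq G] (S : α → Finset G) (hS : ∀ a, (S a).Nonempty)
    (hdisc : ¬(intersectionGraph S).Connected) :
    ∃ t : α → G,
      (univ.biUnion fun a => (S a).image (· + t a)).card < (univ.biUnion S).card := by
  classical
  obtain ⟨b, c, hbc⟩ : ∃ b c, ¬(intersectionGraph S).Reachable b c := by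
    simpa [connected_iff, Preconnected] using hdisc
  set C := univ.filter ((intersectionGraph S).Reachable b)
  have hdisj : Disjoint (C.biUnion S) (Cᶜ.biUnion S) := by
    rw [disjoint_biUnion_left]
    intro a ha
    rw [disjoint_biUnion_right]
    intro a' ha'
    rw [mem_compl] at ha'
    by_contra hint
    have hne : a ≠ a' := by rintro rfl; exact ha' ha
    exact ha' (mem_filter.mpr ⟨mem_univ _, (mem_filter.mp ha).2.trans
      ((intersectionGraph_adj S a a').mpr ⟨hne, hint⟩).reachable⟩)
  have hbC : b ∈ C := mem_filter.mpr ⟨mem_univ _, Reachable.refl _⟩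
  have hcC : c ∈ Cᶜ := mem_compl.mpr fun h => hbc (mem_filter.mp h).2
  obtain ⟨s, hs⟩ := exists_card_image_add_union_lt
    (biUnion_nonempty.mpr ⟨b, hbC, hS b⟩) (biUnion_nonempty.mpr ⟨c, hcC, hS c⟩) hdisj
  refine ⟨fun a => if a ∈ C then s else 0, ?_⟩
  have hsplit (T : α → Finset G) : univ.biUnion T = C.biUnion T ∪ Cᶜ.biUnion T := by
    rw [← union_biUnion, union_compl]
  rw [biUnion_image] at hs
  rw [hsplit, hsplit S]
  convert hs using 3
  · exact biUnion_congr rfl fun a ha => by simp only [ha, if_true]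
  · exact biUnion_congr rfl fun a ha => by simp [mem_compl.mp ha]

theorem image_add_shift (S : Finset ℤ) (u v : ℤ) :
    (shift S u).image (· + v) = shift S (u + v) := by
  simp only [shift, image_image, Function.comp_def, add_assoc]

theorem connected_intersectionGraph_shift_of_forall_card_le {α : Type*} [Fintype α]
    [Nonempty α] (X : α → Finset ℤ) (hX : ∀ a, (X a).Nonempty) (t : α → ℤ)
    (hmin : ∀ t' : α → ℤ, (univ.biUnion fun a => shift (X a) (t a)).card
      ≤ (univ.biUnion fun a => shift (X a) (t' a)).card) :
    (intersectionGraph fun a => shift (X a) (t a)).Connected := by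
  by_contra hdisc
  obtain ⟨t', ht'⟩ :=
    exists_card_biUnion_image_add_lt (fun a => shift (X a) (t a)) (fun a => (hX a).image _) hdisc
  simp only [image_add_shift] at ht'
  exact (hmin (t + t')).not_gt ht'

theorem exists_sub_eq_sub_of_not_disjoint_shift {X Y : Finset ℤ} {u v : ℤ}
    (h : ¬Disjoint (shift X u) (shift Y v)) : ∃ y ∈ Y, ∃ x ∈ X, u - v = y - x := by
  obtain ⟨z, hzX, hzY⟩ := not_disjoint_iff.mp h
  obtain ⟨x, hx, rfl⟩ := mem_image.mp hzX
  obtain ⟨y, hy, hxy⟩ := mem_image.mp hzY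
  exact ⟨y, hy, x, hx, by omega⟩

theorem stmt_13_general {α : Type*} [Fintype α] [Nonempty α]
    (X : α → Finset ℤ) (hX : ∀ a, (X a).Nonempty) :
    ∃ t : α → ℤ,
      (∀ t' : α → ℤ,
          (Finset.univ.biUnion fun a => shift (X a) (t a)).card
            ≤ (Finset.univ.biUnion fun a => shift (X a) (t' a)).card)
      ∧ ∃ H : SimpleGraph α, H.Connected ∧ H.IsAcyclic
          ∧ (∀ b c, H.Adj b c → (shift (X b) (t b) ∩ shift (X c) (t c)).Nonempty)
          ∧ (∀ b c, H.Adj b c →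
              ∃ u ∈ Finset.univ.biUnion X, ∃ v ∈ Finset.univ.biUnion X,
                t b - t c = u - v) := by
  let cardUnion (t : α → ℤ) := (univ.biUnion fun a => shift (X a) (t a)).card
  let t := Function.argmin cardUnion
  have hmin (t' : α → ℤ) : cardUnion t ≤ cardUnion t' := Function.argmin_le cardUnion t'
  obtain ⟨T, hTle, hT⟩ :=
    (connected_intersectionGraph_shift_of_forall_card_le X hX t hmin).exists_isTree_le
  have hmeet : ∀ b c, T.Adj b c → ¬Disjoint (shift (X b) (t b)) (shift (X c) (t c)) :=
    fun b c h => ((intersectionGraph_adj _ b c).mp (hTle h)).2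
  refine ⟨t, hmin, T, hT.connected, hT.isAcyclic,
    fun b c h => not_disjoint_iff_nonempty_inter.mp (hmeet b c h), fun b c h => ?_⟩
  obtain ⟨y, hy, x, hx, hxy⟩ := exists_sub_eq_sub_of_not_disjoint_shift (hmeet b c h)
  exact ⟨y, mem_biUnion.mpr ⟨c, mem_univ _, hy⟩,
    x, mem_biUnion.mpr ⟨b, mem_univ _, hx⟩, hxy⟩

theorem stmt_13 {α : Type*} [Fintype α] [DecidableEq α] [Nonempty α]
    (X : α → Finset ℤ) (hX : ∀ a, (X a).Nonempty) :
    ∃ t : α → ℤ,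
      (∀ t' : α → ℤ,
          (Finset.univ.biUnion fun a => shift (X a) (t a)).card
            ≤ (Finset.univ.biUnion fun a => shift (X a) (t' a)).card)
      ∧ ∃ H : SimpleGraph α, H.Connected ∧ H.IsAcyclic
          ∧ (∀ b c, H.Adj b c → (shift (X b) (t b) ∩ shift (X c) (t c)).Nonempty)
          ∧ (∀ b c, H.Adj b c →
              ∃ u ∈ Finset.univ.biUnion X, ∃ v ∈ Finset.univ.biUnion X,
                t b - t c = u - v) :=
  stmt_13_general X hX
end
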